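/- Let ω be a smooth (r+1)-form on an open set A × U ⊆ ℝ × ℝⁿ, φ : I × B → ℝⁿ a smooth motion with time-velocity φ̇_τ(x) = ∂φ/∂τ(τ,x), and suppose φ̇_τ = v_τ ∘ φ_τ for a vector field v_τ on ℝⁿ. Then the contraction of the pullback with the time direction satisfies φ_τ^#(ω) ⌐ e_t = φ_τ^#(ω ⌐ v_τ) as r-forms on B, where on the left φ : I × B → ℝⁿ is the space-time map and e_t the unit time vector. -/

import Mathlib

open MeasureTheory Filter
open scoped Topology NNReal

noncomputable section

abbrev Euc (n : ℕ) := EuclideanSpace ℝ (Fin n)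

/-- A raw `r`-form on a space `E`: a pointwise assignment of a function on `r`-tuples. -/
abbrev FormOn (E : Type) (r : ℕ) := E → (Fin r → E) → ℝ

abbrev Form (n r : ℕ) := FormOn (Euc n) r

/-- Norm of the simple `r`-vector `v₁ ∧ … ∧ v_r`, via the Gram determinant. -/
def wedgeNorm {n r : ℕ} (v : Fin r → Euc n) : ℝ :=
  Real.sqrt (Matrix.det (Matrix.of fun i j => (inner ℝ (v i) (v j) : ℝ)))

/-- Comass norm of an `r`-covector: sup over simple `r`-vectors of norm at most one. -/
def comass {n r : ℕ} (f : (Fin r → Euc n) → ℝ) : ℝ :=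
  ⨆ v : {v : Fin r → Euc n // wedgeNorm v ≤ 1}, f v.1

/-- `K`-comass seminorm of a form. -/
def MK {n r : ℕ} (K : Set (Euc n)) (ω : Form n r) : ℝ :=
  ⨆ x : K, comass (ω (x : Euc n))

/-- `K`-Lipschitz constant of a map between normed spaces. -/
def lipConstOn {E F : Type} [NormedAddCommGroup E] [NormedAddCommGroup F]
    (K : Set E) (f : E → F) : ℝ :=
  ⨆ p : {p : E × E // p.1 ∈ K ∧ p.2 ∈ K ∧ p.1 ≠ p.2},
    ‖f (p : E × E).1 - f (p : E × E).2‖ / ‖(p : E × E).1 - (p : E × E).2‖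

/-- `K`-Lipschitz seminorm `max(sup‖f‖, Lip_{f,K})`. -/
def lipNormOn {E F : Type} [NormedAddCommGroup E] [NormedAddCommGroup F]
    (K : Set E) (f : E → F) : ℝ :=
  max (⨆ x : K, ‖f (x : E)‖) (lipConstOn K f)

/-- `K`-Lipschitz constant of an `r`-form with respect to the comass norm. -/
def lipFormK {n r : ℕ} (K : Set (Euc n)) (ω : Form n r) : ℝ :=
  ⨆ p : {p : Euc n × Euc n // p.1 ∈ K ∧ p.2 ∈ K ∧ p.1 ≠ p.2},
    comass (fun v => ω (p : Euc n × Euc n).1 v - ω (p : Euc n × Euc n).2 v) /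
      ‖(p : Euc n × Euc n).1 - (p : Euc n × Euc n).2‖

/-- Exterior derivative, by the standard coordinate-free formula. -/
def extDer {n r : ℕ} (ω : Form n r) : Form n (r + 1) :=
  fun x v => ∑ i : Fin (r + 1),
    (-1 : ℝ) ^ (i : ℕ) * fderiv ℝ (fun y => ω y (v ∘ i.succAbove)) x (v i)

/-- `K`-flat seminorm of a form. -/
def flatSemi {n r : ℕ} (K : Set (Euc n)) (ω : Form n r) : ℝ :=
  max (MK K ω) (MK K (extDer ω))

/-- `K`-sharp seminorm of a form. -/
def sharpSemi {n r : ℕ} (K : Set (Euc n)) (ω : Form n r) : ℝ :=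
  max (MK K ω) ((r + 1 : ℝ) * lipFormK K ω)

/-- A smooth compactly supported `r`-form on `U`. -/
def SmoothCptForm {n r : ℕ} (U : Set (Euc n)) (ω : Form n r) : Prop :=
  (∀ v, ContDiff ℝ (⊤ : ℕ∞) fun x => ω x v) ∧ HasCompactSupport ω ∧ tsupport ω ⊆ U

/-- `K`-flat norm of a current on `U`. -/
def flatNormCur {n r : ℕ} (U K : Set (Euc n)) (T : Form n r → ℝ) : ℝ :=
  ⨆ ω : {ω : Form n r // SmoothCptForm U ω ∧ flatSemi K ω ≤ 1}, T ω.1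

/-- Mass norm of a current on `U`. -/
def massCur {n r : ℕ} (U : Set (Euc n)) (T : Form n r → ℝ) : ℝ :=
  ⨆ ω : {ω : Form n r // SmoothCptForm U ω ∧ MK U ω ≤ 1}, T ω.1

/-- Pullback of a raw form along a map. -/
def pullF {E F : Type} [NormedAddCommGroup E] [NormedSpace ℝ E]
    [NormedAddCommGroup F] [NormedSpace ℝ F] {r : ℕ}
    (f : E → F) (ω : FormOn F r) : FormOn E r :=
  fun x v => ω (f x) fun i => fderiv ℝ f x (v i)

/-- Pushforward of a current along a map. -/
def push {E F : Type} [NormedAddCommGroup E] [NormedSpace ℝ E]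
    [NormedAddCommGroup F] [NormedSpace ℝ F] {r : ℕ}
    (f : E → F) (T : FormOn E r → ℝ) : FormOn F r → ℝ :=
  fun ω => T (pullF f ω)

/-- The product current `[a,b] × T`, acting via contraction with the time direction. -/
def prodCur {n r : ℕ} (a b : ℝ) (T : Form n r → ℝ) :
    FormOn (ℝ × Euc n) (r + 1) → ℝ :=
  fun ω => ∫ t in a..b,
    T fun x ξ => ω (t, x) (Fin.cons ((1 : ℝ), (0 : Euc n)) fun i => ((0 : ℝ), ξ i))

/-- Contraction (interior product) of an `(r+1)`-form with a vector field. -/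
def contr {n r : ℕ} (ω : Form n (r + 1)) (v : Euc n → Euc n) : Form n r :=
  fun x ξ => ω x (Fin.cons (v x) ξ)

/-- Lie derivative via Cartan's formula `L_v ω = d(ω ⌐ v) + (dω) ⌐ v`. -/
def lieDer {n r : ℕ} (v : Euc n → Euc n) (ω : Form n (r + 1)) : Form n (r + 1) :=
  fun x ξ => extDer (contr ω v) x ξ + contr (extDer ω) v x ξ

/-- The support of the current `T` is contained in `K`. -/
def CurSupportIn {n r : ℕ} (K : Set (Euc n)) (T : Form n r → ℝ) : Prop :=
  ∀ ω : Form n r, Disjoint (tsupport ω) K → T ω = 0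

/-- for a smooth motion `φ` with Eulerian velocity `v`
(`φ̇_τ = v_τ ∘ φ_τ`), the contraction of the space-time pullback with the time
direction satisfies `φ_τ^#(ω) ⌐ e_t = φ_τ^#(ω ⌐ v_τ)` on space-like `r`-vectors. -/
theorem pullback_time_contraction {n r : ℕ}
    (I : Set ℝ) (B : Set (Euc n)) (hI : IsOpen I) (hB : IsOpen B)
    (φ : ℝ × Euc n → Euc n) (hφ : ContDiff ℝ (⊤ : ℕ∞) φ)
    (v : ℝ → Euc n → Euc n)
    (hv : ∀ τ ∈ I, ∀ x ∈ B, fderiv ℝ φ (τ, x) ((1 : ℝ), (0 : Euc n)) = v τ (φ (τ, x)))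
    (ω : Form n (r + 1)) (hω : ∀ ξ, ContDiff ℝ (⊤ : ℕ∞) fun y => ω y ξ) :
    ∀ τ ∈ I, ∀ x ∈ B, ∀ ξ : Fin r → Euc n,
      pullF φ ω (τ, x) (Fin.cons ((1 : ℝ), (0 : Euc n)) fun i => ((0 : ℝ), ξ i))
        = pullF (fun y => φ (τ, y)) (contr ω (v τ)) x ξ := by
  intro τ hτ x hx ξ
  have hd : HasFDerivAt (fun y => φ (τ, y))
      ((fderiv ℝ φ (τ, x)).comp (ContinuousLinearMap.inr ℝ ℝ (Euc n))) x := by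
    have h1 : HasFDerivAt φ (fderiv ℝ φ (τ, x)) (τ, x) :=
      (hφ.differentiable (by simp) (τ, x)).hasFDerivAt
    have h2 : HasFDerivAt (fun y : Euc n => ((τ, y) : ℝ × Euc n))
        (ContinuousLinearMap.inr ℝ ℝ (Euc n)) x :=
      HasFDerivAt.prodMk (hasFDerivAt_const τ x) (hasFDerivAt_id x)
    exact h1.comp x h2
  have hder : ∀ w : Euc n,
      fderiv ℝ (fun y => φ (τ, y)) x w = fderiv ℝ φ (τ, x) (0, w) := by
    intro w
    rw [hd.fderiv]
    rfl
  simp only [pullF, contr]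
  congr 1
  funext i
  refine Fin.cases ?_ ?_ i
  · simpa using hv τ hτ x hx
  · intro j
    simp [hder]
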